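/- arXiv:1912.05518 — 3 statements merged into one kernel-verified Lean document; each statement's English description precedes it below -/
import Mathlib

section
/- Let p be an odd prime and let φ : ℚ_pˣ → ℤ_p be a continuous group homomorphism from the multiplicative group of units of ℚ_p to the additive group of ℤ_p, whose restriction to the subgroup 1+pℤ_p is not identically zero. Then there exist an integer k ≥ 1 and an element s ∈ 1+pℤ_p such that the kernel of φ is exactly the set {ζ·(p^k·s)^n : ζ ∈ μ_{p−1}, n ∈ ℤ}. -/
/-!
For odd `p` the continuous character `x ↦ (1 + p) ^ x` of `ℤ_p` maps onto the principal units
`1 + pℤ_p`: the estimate `(1 + p) ^ x ≡ 1 + p x (mod p² x)`, proved for natural `x` by the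
binomial theorem and extended by continuity, lets one approximate any principal unit to any
precision, and the range is compact. Together with the Teichmüller lift,
`ℚ_pˣ = p^ℤ × μ_{p-1} × (1 + p)^{ℤ_p}`. A continuous `φ` kills the torsion `μ_{p-1}` and is
`x ↦ x c` on `(1 + p)^{ℤ_p}` with `c ≠ 0`, so `φ (p^v ζ (1 + p)^x) = v φ(p) + x c` vanishes
exactly when `c ∣ v φ(p)`, i.e. when `k ∣ v` for a suitable `k ≥ 1`, and then
`x = (v / k) x₀` where `(1 + p)^{x₀}` corrects `p^k` into the kernel.
-/

open Filter Topology

theorem exists_one_add_pow_eq_add_sq_mul {R : Type*} [CommRing R] (z : R) (n : ℕ) :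
    ∃ t : R, (1 + z) ^ n = 1 + n * z + z ^ 2 * t := by
  induction n with
  | zero => exact ⟨0, by simp⟩
  | succ n ih =>
    obtain ⟨t, ht⟩ := ih
    exact ⟨n + t * (1 + z), by rw [pow_succ, ht]; push_cast; ring⟩

theorem pow_add_two_dvd_one_add_prime_pow_sub {R : Type*} [CommRing R] {p : ℕ} (hp : p.Prime)
    (hp2 : p ≠ 2) (m b : ℕ) :
    (p : R) ^ (m + 2) ∣ (1 + p) ^ (p ^ m * b) - 1 - p ^ (m + 1) * b := by
  have hp3 : 3 ≤ p := (hp.two_le).lt_of_ne' hp2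
  obtain ⟨y, hy⟩ := ZMod.exists_one_add_mul_pow_prime_pow_eq (R := R) (u := p) (v := p) hp
    dvd_rfl (by rw [← pow_two, ← pow_succ]; exact pow_dvd_pow _ hp3) 1 m
  obtain ⟨t, ht⟩ := exists_one_add_pow_eq_add_sq_mul ((p : R) ^ (m + 1) * (1 + p * y)) b
  rw [mul_one] at hy
  refine ⟨b * y + p ^ m * (1 + p * y) ^ 2 * t, ?_⟩
  rw [pow_mul, hy, ← pow_succ, ht]
  ring

variable {p : ℕ} [Fact p.Prime]

theorem PadicInt.norm_le_norm_of_dvd {a b : ℤ_[p]} (h : a ∣ b) : ‖b‖ ≤ ‖a‖ := by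
  obtain ⟨c, rfl⟩ := h
  rw [norm_mul]
  exact mul_le_of_le_one_right (norm_nonneg _) (PadicInt.norm_le_one c)

theorem PadicInt.norm_one_add_p_pow_sub_sub_le (hp2 : p ≠ 2) (t : ℕ) :
    ‖(1 + p : ℤ_[p]) ^ t - 1 - p * t‖ ≤ ‖(p : ℤ_[p]) ^ 2 * t‖ := by
  have hp := Fact.out (p := p.Prime)
  rcases eq_or_ne t 0 with rfl | ht
  · simp
  obtain ⟨m, b, hpb, rfl⟩ := Nat.exists_eq_pow_mul_and_not_dvd ht p hp.ne_one
  have hb : ‖(b : ℤ_[p])‖ = 1 :=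
    PadicInt.norm_natCast_eq_one_iff.mpr ((Nat.Prime.coprime_iff_not_dvd hp).mpr hpb)
  have key := pow_add_two_dvd_one_add_prime_pow_sub (R := ℤ_[p]) hp hp2 m b
  calc ‖(1 + p : ℤ_[p]) ^ (p ^ m * b) - 1 - p * ↑(p ^ m * b)‖
      ≤ ‖(p : ℤ_[p]) ^ (m + 2)‖ := by
        refine PadicInt.norm_le_norm_of_dvd ?_
        convert key using 2
        push_cast; ring
    _ = ‖(p : ℤ_[p]) ^ 2 * ↑(p ^ m * b)‖ := by
        push_cast
        rw [norm_mul, norm_mul, hb, mul_one, ← norm_mul, ← pow_add, add_comm]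

theorem PadicInt.norm_p_lt_one : ‖(p : ℤ_[p])‖ < 1 :=
  PadicInt.mem_nonunits.mp PadicInt.p_nonunit

theorem PadicInt.tendsto_p_pow_atTop_nhds_zero :
    Tendsto (fun n : ℕ ↦ (p : ℤ_[p]) ^ n) atTop (𝓝 0) :=
  tendsto_pow_atTop_nhds_zero_iff_norm_lt_one.mpr PadicInt.norm_p_lt_one

variable (p) in
noncomputable def oneAddPPow : AddChar ℤ_[p] ℤ_[p] :=
  PadicInt.addChar_of_value_at_one (p : ℤ_[p]) PadicInt.tendsto_p_pow_atTop_nhds_zero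

@[fun_prop]
theorem continuous_oneAddPPow : Continuous (oneAddPPow p) :=
  PadicInt.continuous_addChar_of_value_at_one _

theorem oneAddPPow_natCast (n : ℕ) : oneAddPPow p n = (1 + p) ^ n := by
  rw [← nsmul_one, AddChar.map_nsmul_eq_pow, oneAddPPow, PadicInt.addChar_of_value_at_one_def]

theorem norm_oneAddPPow_sub_sub_le (hp2 : p ≠ 2) (x : ℤ_[p]) :
    ‖oneAddPPow p x - 1 - p * x‖ ≤ ‖(p : ℤ_[p]) ^ 2 * x‖ := by
  refine PadicInt.denseRange_natCast.induction_on x (isClosed_le (by fun_prop) (by fun_prop)) ?_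
  intro n
  rw [oneAddPPow_natCast]
  exact PadicInt.norm_one_add_p_pow_sub_sub_le hp2 n

theorem oneAddPPow_mul_neg (x : ℤ_[p]) : oneAddPPow p x * oneAddPPow p (-x) = 1 := by
  rw [← AddChar.map_add_eq_mul, add_neg_cancel, AddChar.map_zero_eq_one]

theorem norm_oneAddPPow (x : ℤ_[p]) : ‖oneAddPPow p x‖ = 1 :=
  PadicInt.isUnit_iff.mp (IsUnit.of_mul_eq_one _ (oneAddPPow_mul_neg x))

theorem norm_oneAddPPow_sub_one (hp2 : p ≠ 2) (x : ℤ_[p]) :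
    ‖oneAddPPow p x - 1‖ = ‖(p : ℤ_[p]) * x‖ := by
  rcases eq_or_ne x 0 with rfl | hx
  · simp
  have hlt : ‖oneAddPPow p x - 1 - p * x‖ < ‖(p : ℤ_[p]) * x‖ := by
    refine (norm_oneAddPPow_sub_sub_le hp2 x).trans_lt ?_
    rw [pow_two, mul_assoc, norm_mul (p : ℤ_[p])]
    have hpx : (p : ℤ_[p]) * x ≠ 0 := mul_ne_zero (by simp [(Fact.out : p.Prime).ne_zero]) hx
    exact mul_lt_of_lt_one_left (norm_pos_iff.mpr hpx) PadicInt.norm_p_lt_one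
  rw [← sub_add_cancel (oneAddPPow p x - 1) (p * x),
    IsUltrametricDist.norm_add_eq_max_of_norm_ne_norm hlt.ne, max_eq_right hlt.le]

theorem dvd_oneAddPPow_sub_one (hp2 : p ≠ 2) (x : ℤ_[p]) : (p : ℤ_[p]) ∣ oneAddPPow p x - 1 := by
  rw [← PadicInt.norm_lt_one_iff_dvd, norm_oneAddPPow_sub_one hp2, norm_mul]
  exact mul_lt_one_of_nonneg_of_lt_one_left (norm_nonneg _) PadicInt.norm_p_lt_one
    (PadicInt.norm_le_one x)

/-- One approximation step: if `u (1 + p) ^ (-x) = 1 + p w`, then `x + w` is `‖p‖` times closer. -/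
theorem exists_norm_sub_oneAddPPow_le_mul (hp2 : p ≠ 2) {u : ℤ_[p]} (hu : (p : ℤ_[p]) ∣ u - 1)
    (x : ℤ_[p]) : ∃ x', ‖u - oneAddPPow p x'‖ ≤ ‖(p : ℤ_[p])‖ * ‖u - oneAddPPow p x‖ := by
  obtain ⟨w, hw⟩ : (p : ℤ_[p]) ∣ u * oneAddPPow p (-x) - 1 := by
    rw [show u * oneAddPPow p (-x) - 1 = (u - 1) * oneAddPPow p (-x) + (oneAddPPow p (-x) - 1)
      by ring]
    exact dvd_add (hu.mul_right _) (dvd_oneAddPPow_sub_one hp2 _)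
  have hux : u - oneAddPPow p x = oneAddPPow p x * (u * oneAddPPow p (-x) - 1) := by
    linear_combination (-u) * oneAddPPow_mul_neg x
  refine ⟨x + w, ?_⟩
  calc ‖u - oneAddPPow p (x + w)‖ = ‖oneAddPPow p x * -(oneAddPPow p w - 1 - p * w)‖ := by
        rw [AddChar.map_add_eq_mul]
        congr 1
        linear_combination (-u) * oneAddPPow_mul_neg x + oneAddPPow p x * hw
    _ ≤ ‖(p : ℤ_[p]) ^ 2 * w‖ := by
        rw [norm_mul, norm_oneAddPPow, one_mul, norm_neg]
        exact norm_oneAddPPow_sub_sub_le hp2 w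
    _ = ‖(p : ℤ_[p])‖ * ‖u - oneAddPPow p x‖ := by
        rw [hux, norm_mul (oneAddPPow p x), norm_oneAddPPow, one_mul, hw, pow_two, mul_assoc,
          norm_mul (p : ℤ_[p])]

theorem exists_oneAddPPow_eq (hp2 : p ≠ 2) {u : ℤ_[p]} (hu : (p : ℤ_[p]) ∣ u - 1) :
    ∃ x, oneAddPPow p x = u := by
  have happrox : ∀ n : ℕ, ∃ x, ‖u - oneAddPPow p x‖ ≤ ‖(p : ℤ_[p])‖ ^ n := by
    intro n
    induction n with
    | zero => exact ⟨0, by simpa using PadicInt.norm_le_one (u - 1)⟩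
    | succ n ih =>
      obtain ⟨x, hx⟩ := ih
      obtain ⟨x', hx'⟩ := exists_norm_sub_oneAddPPow_le_mul hp2 hu x
      exact ⟨x', hx'.trans (by rw [pow_succ']; gcongr)⟩
  have hclosed : IsClosed (Set.range (oneAddPPow p)) :=
    (isCompact_range continuous_oneAddPPow).isClosed
  rw [← Set.mem_range, ← hclosed.closure_eq, Metric.mem_closure_range_iff]
  intro ε hε
  obtain ⟨n, hn⟩ := exists_pow_lt_of_lt_one hε (PadicInt.norm_p_lt_one (p := p))
  obtain ⟨x, hx⟩ := happrox n
  exact ⟨x, by rw [dist_eq_norm]; exact hx.trans_lt hn⟩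

variable (p) in
noncomputable def oneAddPPowUnits : AddChar ℤ_[p] ℚ_[p]ˣ where
  toFun x := ⟨oneAddPPow p x, oneAddPPow p (-x),
    by rw [← PadicInt.coe_mul, oneAddPPow_mul_neg, PadicInt.coe_one],
    by rw [← PadicInt.coe_mul, mul_comm, oneAddPPow_mul_neg, PadicInt.coe_one]⟩
  map_zero_eq_one' := Units.ext (by simp)
  map_add_eq_mul' x y := Units.ext (by simp [AddChar.map_add_eq_mul])

@[simp]
theorem coe_oneAddPPowUnits (x : ℤ_[p]) :
    (oneAddPPowUnits p x : ℚ_[p]) = oneAddPPow p x :=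
  rfl

theorem continuous_oneAddPPowUnits : Continuous (oneAddPPowUnits p) :=
  Units.isEmbedding_val₀.continuous_iff.mpr (continuous_subtype_val.comp continuous_oneAddPPow)

theorem exists_oneAddPPowUnits_eq (hp2 : p ≠ 2) {u : ℚ_[p]ˣ}
    (hu : ∃ y : ℤ_[p], (u : ℚ_[p]) = 1 + p * y) : ∃ x, oneAddPPowUnits p x = u := by
  obtain ⟨y, hy⟩ := hu
  obtain ⟨x, hx⟩ := exists_oneAddPPow_eq hp2 (u := 1 + p * y) ⟨y, by ring⟩
  exact ⟨x, Units.ext (by rw [coe_oneAddPPowUnits, hx, hy]; push_cast; rfl)⟩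

/-- Hensel's lemma for `X ^ p - X`: Fermat's little theorem makes every `w` an approximate root,
and the derivative `p X ^ (p - 1) - 1` is a unit everywhere. -/
theorem PadicInt.exists_pow_eq_self_norm_sub_lt_one (w : ℤ_[p]) :
    ∃ ζ : ℤ_[p], ζ ^ p = ζ ∧ ‖ζ - w‖ < 1 := by
  set F : Polynomial ℤ_[p] := Polynomial.X ^ p - Polynomial.X
  have hF : ∀ z : ℤ_[p], Polynomial.aeval z F = z ^ p - z := by simp [F]
  have hF' : ‖Polynomial.aeval w (Polynomial.derivative F)‖ = 1 := by
    have hlt : ‖(p : ℤ_[p]) * w ^ (p - 1)‖ < ‖(-1 : ℤ_[p])‖ := by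
      rw [norm_neg, norm_one, norm_mul]
      exact mul_lt_one_of_nonneg_of_lt_one_left (norm_nonneg _) PadicInt.norm_p_lt_one
        (PadicInt.norm_le_one _)
    have : Polynomial.aeval w (Polynomial.derivative F) = p * w ^ (p - 1) + -1 := by
      simp [F, sub_eq_add_neg, Polynomial.derivative_X_pow]
    rw [this, IsUltrametricDist.norm_add_eq_max_of_norm_ne_norm hlt.ne, max_eq_right hlt.le,
      norm_neg, norm_one]
  have hFw : ‖Polynomial.aeval w F‖ < 1 := by
    rw [hF, ← PadicInt.mem_nonunits, ← IsLocalRing.mem_maximalIdeal, ← PadicInt.ker_toZMod]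
    simp [RingHom.mem_ker, ZMod.pow_card]
  obtain ⟨ζ, hζ, hζw, -, -⟩ := hensels_lemma (F := F) (a := w) (by rw [hF', one_pow]; exact hFw)
  rw [hF, sub_eq_zero] at hζ
  exact ⟨ζ, hζ, hF' ▸ hζw⟩

theorem PadicInt.exists_pow_eq_one_and_dvd_sub_one_and_eq_mul (w : ℤ_[p]ˣ) :
    ∃ ζ u : ℤ_[p]ˣ, ζ ^ (p - 1) = 1 ∧ (p : ℤ_[p]) ∣ (u : ℤ_[p]) - 1 ∧ w = ζ * u := by
  have hp := Fact.out (p := p.Prime)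
  obtain ⟨ζ, hζp, hζw⟩ := PadicInt.exists_pow_eq_self_norm_sub_lt_one (w : ℤ_[p])
  have hζ0 : ζ ≠ 0 := by
    rintro rfl
    simp [PadicInt.norm_units] at hζw
  have hζ : ζ ^ (p - 1) = 1 := by
    refine mul_right_cancel₀ hζ0 ?_
    rw [← pow_succ, Nat.sub_add_cancel hp.one_le, hζp, one_mul]
  set ζu := Units.ofPowEqOne ζ (p - 1) hζ (Nat.sub_ne_zero_of_lt hp.one_lt)
  refine ⟨ζu, ζu⁻¹ * w, Units.pow_ofPowEqOne _ _, ?_, by rw [mul_inv_cancel_left]⟩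
  have : ((ζu⁻¹ * w : ℤ_[p]ˣ) : ℤ_[p]) - 1 = ↑ζu⁻¹ * -(ζ - w) := by
    have hζζ : ((ζu⁻¹ : ℤ_[p]ˣ) : ℤ_[p]) * ζ = 1 := Units.inv_mul ζu
    rw [Units.val_mul, mul_neg, mul_sub, hζζ, neg_sub]
  rw [this]
  exact (((PadicInt.norm_lt_one_iff_dvd _).mp hζw).neg_right).mul_left _

variable (p) in
noncomputable def Padic.pUnit : ℚ_[p]ˣ :=
  Units.mk0 (p : ℚ_[p]) (by exact_mod_cast (Fact.out : p.Prime).ne_zero)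

@[simp]
theorem Padic.coe_pUnit : (Padic.pUnit p : ℚ_[p]) = p :=
  rfl

theorem Padic.exists_eq_pUnit_zpow_mul (q : ℚ_[p]ˣ) :
    ∃ (v : ℤ) (w : ℤ_[p]ˣ),
      q = Padic.pUnit p ^ v * Units.map PadicInt.Coe.ringHom.toMonoidHom w := by
  have hp0 : (p : ℚ_[p]) ≠ 0 := (Padic.pUnit p).ne_zero
  set v := (q : ℚ_[p]).valuation
  have hw : ‖(q : ℚ_[p]) * (p : ℚ_[p]) ^ (-v)‖ = 1 := by
    rw [norm_mul, Padic.norm_eq_zpow_neg_valuation q.ne_zero, Padic.norm_p_zpow, neg_neg,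
      ← zpow_add₀ (by exact_mod_cast (Fact.out : p.Prime).ne_zero), neg_add_cancel, zpow_zero]
  refine ⟨v, PadicInt.mkUnits hw, Units.ext ?_⟩
  rw [Units.val_mul, Units.val_zpow_eq_zpow_val]
  change (q : ℚ_[p]) = p ^ v * ((PadicInt.mkUnits hw : ℤ_[p]) : ℚ_[p])
  rw [PadicInt.mkUnits_eq, zpow_neg, mul_left_comm, mul_inv_cancel₀ (zpow_ne_zero _ hp0), mul_one]

theorem exists_eq_pUnit_zpow_mul_mul_oneAddPPowUnits (hp2 : p ≠ 2) (q : ℚ_[p]ˣ) :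
    ∃ (v : ℤ) (ζ : ℚ_[p]ˣ) (x : ℤ_[p]),
      ζ ^ (p - 1) = 1 ∧ q = Padic.pUnit p ^ v * ζ * oneAddPPowUnits p x := by
  obtain ⟨v, w, rfl⟩ := Padic.exists_eq_pUnit_zpow_mul q
  obtain ⟨ζ, u, hζ, hu, rfl⟩ := PadicInt.exists_pow_eq_one_and_dvd_sub_one_and_eq_mul w
  obtain ⟨x, hx⟩ := exists_oneAddPPow_eq hp2 hu
  refine ⟨v, Units.map PadicInt.Coe.ringHom.toMonoidHom ζ, x, by rw [← map_pow, hζ, map_one], ?_⟩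
  rw [map_mul, mul_assoc]
  congr 2
  exact Units.ext (by simp [hx]; rfl)

section Hom

variable {G A : Type*} [Group G] [AddGroup A] {φ : G → A}

theorem map_zpow_of_map_mul (hφ : ∀ a b, φ (a * b) = φ a + φ b) (g : G) (n : ℤ) :
    φ (g ^ n) = n • φ g :=
  map_zsmul (AddMonoidHom.mk' (φ ∘ Additive.toMul) hφ) n (Additive.ofMul g)

theorem map_eq_zero_of_pow_eq_one [IsAddTorsionFree A] (hφ : ∀ a b, φ (a * b) = φ a + φ b)
    {g : G} {n : ℕ} (hn : n ≠ 0) (hg : g ^ n = 1) : φ g = 0 := by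
  have h := map_zpow_of_map_mul hφ g n
  have h1 := map_zpow_of_map_mul hφ g 0
  rw [zpow_natCast, hg, natCast_zsmul] at h
  rw [zpow_zero, zero_zsmul] at h1
  exact (nsmul_eq_zero_iff_right hn).mp (h.symm.trans h1)

end Hom

theorem PadicInt.map_eq_mul_map_one {M : Type*} [AddCommGroup M] [Module ℤ_[p] M]
    [TopologicalSpace M] [T2Space M] [ContinuousSMul ℤ_[p] M] (f : ℤ_[p] →+ M)
    (hf : Continuous f) (x : ℤ_[p]) : f x = x • f 1 := by
  refine PadicInt.denseRange_natCast.induction_on x (isClosed_eq hf (by fun_prop)) fun n ↦ ?_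
  rw [← nsmul_one, map_nsmul, smul_assoc, one_smul]

theorem Int.exists_pos_forall_mem_iff_dvd (H : AddSubgroup ℤ) (hH : H ≠ ⊥) :
    ∃ k : ℕ, 0 < k ∧ ∀ v, v ∈ H ↔ (k : ℤ) ∣ v := by
  obtain ⟨g, rfl⟩ := Int.subgroup_cyclic H
  refine ⟨g.natAbs, ?_, fun v ↦ ?_⟩
  · rw [Int.natAbs_pos]
    rintro rfl
    simp at hH
  · rw [← AddSubgroup.zmultiples_eq_closure, Int.mem_zmultiples_iff, Int.natAbs_dvd]

theorem PadicInt.exists_pos_forall_dvd_mul_iff {c : ℤ_[p]} (hc : c ≠ 0) (a : ℤ_[p]) :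
    ∃ k : ℕ, 0 < k ∧ ∀ v : ℤ, c ∣ v * a ↔ (k : ℤ) ∣ v := by
  let H := (Ideal.span {c}).toAddSubgroup.comap
    ((AddMonoidHom.mulRight a).comp (Int.castAddHom ℤ_[p]))
  have hH : ∀ v : ℤ, v ∈ H ↔ c ∣ v * a := fun v ↦ by simp [H, Ideal.mem_span_singleton]
  have hpc : c ∣ (p : ℤ_[p]) ^ c.valuation := by
    have := (Units.mul_left_dvd (u := PadicInt.unitCoeff hc)).mpr
      (dvd_refl ((p : ℤ_[p]) ^ c.valuation))
    rwa [← PadicInt.unitCoeff_spec hc] at this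
  obtain ⟨k, hk, hkH⟩ := Int.exists_pos_forall_mem_iff_dvd H <| by
    rw [AddSubgroup.ne_bot_iff_exists_ne_zero]
    exact ⟨⟨(p ^ c.valuation : ℕ), (hH _).mpr (by push_cast; exact hpc.mul_right a)⟩,
      by simp [(Fact.out : p.Prime).ne_zero]⟩
  exact ⟨k, hk, fun v ↦ (hH v).symm.trans (hkH v)⟩

theorem Units.exists_pow_eq_one_and_eq_mul_zpow_iff {K : Type*} [GroupWithZero K] {m : ℕ}
    (hm : m ≠ 0) (q r : Kˣ) :
    (∃ (ζ : Kˣ) (n : ℤ), ζ ^ m = 1 ∧ q = ζ * r ^ n) ↔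
      ∃ (ζ : K) (n : ℤ), ζ ^ m = 1 ∧ (q : K) = ζ * (r : K) ^ n := by
  constructor
  · rintro ⟨ζ, n, hζ, rfl⟩
    exact ⟨ζ, n, by rw [← Units.val_pow_eq_pow_val, hζ, Units.val_one],
      by rw [Units.val_mul, Units.val_zpow_eq_zpow_val]⟩
  · rintro ⟨ζ, n, hζ, hq⟩
    have hζ0 : ζ ≠ 0 := by
      rintro rfl
      exact zero_ne_one ((zero_pow hm).symm.trans hζ)
    exact ⟨Units.mk0 ζ hζ0, n, Units.ext (by simpa using hζ),
      Units.ext (by rw [hq, Units.val_mul, Units.val_zpow_eq_zpow_val, Units.val_mk0])⟩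

theorem map_eq_zero_iff_of_map_oneAddPPowUnits {φ : ℚ_[p]ˣ → ℤ_[p]}
    (hφ : ∀ a b, φ (a * b) = φ a + φ b) (hp2 : p ≠ 2) {c : ℤ_[p]} (hc : c ≠ 0)
    (hφe : ∀ x, φ (oneAddPPowUnits p x) = x * c) {k : ℕ}
    (hk : ∀ v : ℤ, c ∣ v * φ (Padic.pUnit p) ↔ (k : ℤ) ∣ v) {x₀ : ℤ_[p]}
    (hx₀ : φ (Padic.pUnit p ^ k * oneAddPPowUnits p x₀) = 0) (q : ℚ_[p]ˣ) :
    φ q = 0 ↔ ∃ (ζ : ℚ_[p]ˣ) (n : ℤ),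
      ζ ^ (p - 1) = 1 ∧ q = ζ * (Padic.pUnit p ^ k * oneAddPPowUnits p x₀) ^ n := by
  have hφμ : ∀ ζ : ℚ_[p]ˣ, ζ ^ (p - 1) = 1 → φ ζ = 0 := fun ζ ↦
    map_eq_zero_of_pow_eq_one hφ (Nat.sub_ne_zero_of_lt (Fact.out : p.Prime).one_lt)
  constructor
  · intro hq
    obtain ⟨v, ζ, x, hζ, rfl⟩ := exists_eq_pUnit_zpow_mul_mul_oneAddPPowUnits hp2 q
    rw [hφ, hφ, map_zpow_of_map_mul hφ, hφμ ζ hζ, hφe, add_zero, zsmul_eq_mul] at hq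
    obtain ⟨n, rfl⟩ := (hk v).mp ⟨-x, by linear_combination hq⟩
    rw [hφ, ← zpow_natCast, map_zpow_of_map_mul hφ, hφe, zsmul_eq_mul] at hx₀
    have hx : x = n * x₀ := mul_right_cancel₀ hc <| by
      push_cast at hq hx₀ ⊢
      linear_combination hq - n * hx₀
    refine ⟨ζ, n, hζ, ?_⟩
    rw [hx, ← zsmul_eq_mul, AddChar.map_zsmul_eq_zpow, mul_zpow, ← zpow_natCast, ← zpow_mul,
      mul_assoc]
    exact mul_left_comm _ _ _
  · rintro ⟨ζ, n, hζ, rfl⟩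
    rw [hφ, hφμ ζ hζ, map_zpow_of_map_mul hφ, hx₀, smul_zero, zero_add]

/-- Lemma 3.8 of the paper: the kernel of a continuous homomorphism
`φ : ℚ_pˣ → (ℤ_p, +)` which is nontrivial on the principal units `1 + pℤ_p`
has the form `μ_{p-1} × (p^k·s)^ℤ` with `k ≥ 1` and `s ∈ 1 + pℤ_p`. -/
theorem stmt_0 (p : ℕ) [Fact p.Prime] (hp : Odd p)
    (φ : ℚ_[p]ˣ → ℤ_[p])
    (hhom : ∀ a b : ℚ_[p]ˣ, φ (a * b) = φ a + φ b)
    (hcont : Continuous φ)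
    (hnt : ∃ u : ℚ_[p]ˣ, (∃ y : ℤ_[p], (u : ℚ_[p]) = 1 + p * y) ∧ φ u ≠ 0) :
    ∃ (k : ℕ) (s : ℤ_[p]), 1 ≤ k ∧ (∃ y : ℤ_[p], s = 1 + p * y) ∧
      ∀ q : ℚ_[p]ˣ, φ q = 0 ↔
        ∃ (ζ : ℚ_[p]) (n : ℤ), ζ ^ (p - 1) = 1 ∧
          (q : ℚ_[p]) = ζ * ((p : ℚ_[p]) ^ k * (s : ℚ_[p])) ^ n := by
  have hp2 : p ≠ 2 := by rintro rfl; exact absurd hp (by decide)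
  have hφe (x : ℤ_[p]) : φ (oneAddPPowUnits p x) = x * φ (oneAddPPowUnits p 1) :=
    PadicInt.map_eq_mul_map_one (AddMonoidHom.mk' (fun x ↦ φ (oneAddPPowUnits p x))
      fun x y ↦ by rw [AddChar.map_add_eq_mul, hhom]) (hcont.comp continuous_oneAddPPowUnits) x
  have hc : φ (oneAddPPowUnits p 1) ≠ 0 := by
    obtain ⟨u, hu, hφu⟩ := hnt
    obtain ⟨x, rfl⟩ := exists_oneAddPPowUnits_eq hp2 hu
    exact right_ne_zero_of_mul (hφe x ▸ hφu)
  obtain ⟨k, hk, hka⟩ := PadicInt.exists_pos_forall_dvd_mul_iff hc (φ (Padic.pUnit p))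
  obtain ⟨x₀, hx₀⟩ := (hka k).mpr dvd_rfl
  have hr : φ (Padic.pUnit p ^ k * oneAddPPowUnits p (-x₀)) = 0 := by
    rw [hhom, ← zpow_natCast, map_zpow_of_map_mul hhom, hφe, zsmul_eq_mul, hx₀]
    ring
  obtain ⟨y, hy⟩ := dvd_oneAddPPow_sub_one hp2 (-x₀)
  refine ⟨k, oneAddPPow p (-x₀), hk, ⟨y, by rw [← hy]; ring⟩, fun q ↦ ?_⟩
  rw [map_eq_zero_iff_of_map_oneAddPPowUnits hhom hp2 hc hφe hka hr,
    Units.exists_pow_eq_one_and_eq_mul_zpow_iff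
      (Nat.sub_ne_zero_of_lt (Fact.out : p.Prime).one_lt)]
  simp only [Units.val_mul, Units.val_pow_eq_pow_val, Padic.coe_pUnit, coe_oneAddPPowUnits]
end

section
/- Let p be an odd prime, let k ≥ 1 be an integer, let s ∈ 1+pℤ_p, and set N := {ζ·(p^k·s)^n : ζ ∈ μ_{p−1}, n ∈ ℤ} ⊆ ℚ_pˣ. Let π ∈ ℚ_pˣ be an element whose p-adic valuation is a multiple of k, say v_p(π) = k·m with m ∈ ℤ. Then there exists a unique x ∈ 1+pℤ_p such that π·x ∈ N. -/
/-!
Every π ∈ ℚ_pˣ with `v_p(π) = k m` factors as `π = c (p^k s)^m` with `c ∈ ℤ_pˣ`. Comparing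
absolute values, `π x = ζ (p^k s)^n` with `x, ζ` units forces `n = m` and `ζ = c x`, so the
condition on the principal unit `x` is just `(c x)^(p-1) = 1`. Modulo `p`, every element of
`𝔽_pˣ` is a simple root of `X^(p-1) - 1`, so by Hensel's lemma there is a unique
`(p-1)`-st root of unity `ω ≡ c (mod p)`, and `x = c⁻¹ ω` is the unique solution.
-/

namespace PadicInt

open Polynomial IsLocalRing

variable {p : ℕ} [Fact p.Prime]

theorem toZMod_eq_zero_iff_mem_maximalIdeal {x : ℤ_[p]} :
    toZMod x = 0 ↔ x ∈ maximalIdeal ℤ_[p] := by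
  rw [← ker_toZMod, RingHom.mem_ker]

theorem isUnit_iff_toZMod_ne_zero {x : ℤ_[p]} : IsUnit x ↔ toZMod x ≠ 0 := by
  rw [Ne, toZMod_eq_zero_iff_mem_maximalIdeal, notMem_maximalIdeal]

theorem toZMod_eq_one_iff {x : ℤ_[p]} : toZMod x = 1 ↔ ∃ y : ℤ_[p], x = 1 + p * y := by
  rw [← sub_eq_zero, ← map_one toZMod, ← map_sub, toZMod_eq_zero_iff_mem_maximalIdeal,
    maximalIdeal_eq_span_p, Ideal.mem_span_singleton']
  constructor
  · rintro ⟨y, hy⟩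
    exact ⟨y, by rw [mul_comm, hy]; ring⟩
  · rintro ⟨y, rfl⟩
    exact ⟨y, by ring⟩

theorem isUnit_derivative_X_pow_sub_one_eval {z : ℤ_[p]} (hz : IsUnit z) :
    IsUnit ((X ^ (p - 1) - 1 : ℤ_[p][X]).derivative.eval z) := by
  have hp : IsUnit ((p - 1 : ℕ) : ℤ_[p]) := by
    rw [isUnit_iff_toZMod_ne_zero, map_natCast, Ne, ZMod.natCast_eq_zero_iff]
    have := (Fact.out : p.Prime).one_lt
    exact Nat.not_dvd_of_pos_of_lt (by omega) (by omega)
  simpa [derivative_X_pow] using hp.mul (hz.pow _)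

/-- The Teichmüller lift of a unit of `ℤ_p`. -/
theorem existsUnique_pow_eq_one_toZMod_eq {u : ℤ_[p]} (hu : IsUnit u) :
    ∃! ω : ℤ_[p], ω ^ (p - 1) = 1 ∧ toZMod ω = toZMod u := by
  have hroot {z : ℤ_[p]} : (X ^ (p - 1) - 1 : ℤ_[p][X]).eval z = 0 ↔ z ^ (p - 1) = 1 := by
    simp [sub_eq_zero]
  obtain ⟨ω, hω, hωu⟩ := HenselianRing.is_henselian (X ^ (p - 1) - 1 : ℤ_[p][X])
    (monic_X_pow_sub_C 1 (Nat.sub_ne_zero_of_lt (Fact.out : p.Prime).one_lt)) u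
    (by
      rw [← toZMod_eq_zero_iff_mem_maximalIdeal]
      simp [ZMod.pow_card_sub_one_eq_one (isUnit_iff_toZMod_ne_zero.1 hu)])
    ((isUnit_derivative_X_pow_sub_one_eval hu).map _)
  have hωu : toZMod ω = toZMod u := by
    rwa [← toZMod_eq_zero_iff_mem_maximalIdeal, map_sub, sub_eq_zero] at hωu
  refine ⟨ω, ⟨hroot.1 hω, hωu⟩, fun ω' ⟨hω', hω'u⟩ => ?_⟩
  refine eq_of_eval_eq_zero_of_not_isUnit_sub (hroot.2 hω') hω ?_
    (isUnit_derivative_X_pow_sub_one_eval (isUnit_iff_toZMod_ne_zero.2 ?_))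
  · rw [isUnit_iff_toZMod_ne_zero, map_sub, hω'u, hωu, sub_self, not_not]
  · exact hω'u ▸ isUnit_iff_toZMod_ne_zero.1 hu

theorem existsUnique_toZMod_eq_one_mul_pow_eq_one {c : ℤ_[p]} (hc : IsUnit c) :
    ∃! x : ℤ_[p], toZMod x = 1 ∧ (c * x) ^ (p - 1) = 1 := by
  obtain ⟨ω, ⟨hω, hωc⟩, hω_unique⟩ := existsUnique_pow_eq_one_toZMod_eq hc
  refine ⟨↑hc.unit⁻¹ * ω, ⟨?_, ?_⟩, fun x ⟨hx, hcx⟩ => ?_⟩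
  · rw [map_mul, hωc, ← map_mul, hc.val_inv_mul, map_one]
  · rwa [← mul_assoc, hc.mul_val_inv, one_mul]
  · apply hc.mul_left_cancel
    rw [← mul_assoc, hc.mul_val_inv, one_mul]
    exact hω_unique _ ⟨hcx, by rw [map_mul, hx, mul_one]⟩

theorem norm_mul_zpow_neg_eq_one {π w : ℚ_[p]} (hπ : π ≠ 0) {k : ℕ} {m : ℤ}
    (hw : ‖w‖ = (p : ℝ) ^ (-(k : ℤ))) (hval : π.valuation = k * m) :
    ‖π * w ^ (-m)‖ = 1 := by
  have hp : (p : ℝ) ≠ 0 := by exact_mod_cast (Fact.out : p.Prime).ne_zero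
  rw [norm_mul, Padic.norm_eq_zpow_neg_valuation hπ, hval, norm_zpow, hw, ← zpow_mul,
    ← zpow_add₀ hp]
  simp

end PadicInt

theorem exists_pow_eq_one_mul_zpow_iff {K : Type*} [NormedField K] {d : ℕ} (hd : d ≠ 0)
    {w : K} (hw₀ : w ≠ 0) (hw₁ : ‖w‖ ≠ 1) {π c y : K} {m : ℤ} (hπ : π = c * w ^ m)
    (hcy : ‖c * y‖ = 1) :
    (∃ (ζ : K) (n : ℤ), ζ ^ d = 1 ∧ π * y = ζ * w ^ n) ↔ (c * y) ^ d = 1 := by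
  have hπy : π * y = c * y * w ^ m := by rw [hπ]; ring
  constructor
  · rintro ⟨ζ, n, hζ, h⟩
    have hζ₁ : ‖ζ‖ = 1 := by
      rw [← pow_eq_one_iff_of_nonneg (norm_nonneg ζ) hd, ← norm_pow, hζ, norm_one]
    have hmn : m = n := by
      apply zpow_right_injective₀ (norm_pos_iff.2 hw₀) hw₁
      simpa only [hπy, norm_mul, norm_zpow, hcy, hζ₁, one_mul] using congrArg norm h
    rw [hπy, hmn] at h
    rwa [mul_right_cancel₀ (zpow_ne_zero n hw₀) h]
  · exact fun h => ⟨c * y, m, h, hπy⟩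

open PadicInt in
theorem stmt_3_general (p : ℕ) [Fact p.Prime]
    (k : ℕ) (hk : 1 ≤ k) (s : ℤ_[p]) (hs : ∃ y : ℤ_[p], s = 1 + p * y)
    (π : ℚ_[p]) (hπ : π ≠ 0) (m : ℤ) (hval : π.valuation = k * m) :
    ∃! x : ℤ_[p], (∃ y : ℤ_[p], x = 1 + p * y) ∧
      ∃ (ζ : ℚ_[p]) (n : ℤ), ζ ^ (p - 1) = 1 ∧
        π * (x : ℚ_[p]) = ζ * ((p : ℚ_[p]) ^ k * (s : ℚ_[p])) ^ n := by
  set w : ℚ_[p] := (p : ℚ_[p]) ^ k * s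
  have hs₁ : ‖s‖ = 1 :=
    PadicInt.isUnit_iff.1 (isUnit_iff_toZMod_ne_zero.2 (by simp [toZMod_eq_one_iff.2 hs]))
  have hw : ‖w‖ = (p : ℝ) ^ (-(k : ℤ)) := by simp [w, hs₁]
  have hp₁ : (1 : ℝ) < p := by exact_mod_cast (Fact.out : p.Prime).one_lt
  have hw₀ : w ≠ 0 := norm_ne_zero_iff.1 (hw ▸ (zpow_pos (by linarith) _).ne')
  have hw₁ : ‖w‖ ≠ 1 := hw ▸ (zpow_lt_one_of_neg₀ hp₁ (by omega)).ne
  have hc := norm_mul_zpow_neg_eq_one hπ hw hval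
  set c : ℤ_[p]ˣ := mkUnits hc
  have hπc : π = (c : ℚ_[p]) * w ^ m := by
    rw [mkUnits_eq, mul_assoc, ← zpow_add₀ hw₀, neg_add_cancel, zpow_zero, mul_one]
  refine (existsUnique_congr fun x => ?_).1 (existsUnique_toZMod_eq_one_mul_pow_eq_one c.isUnit)
  rw [← toZMod_eq_one_iff]
  refine and_congr_right fun hx => ?_
  have hcx : ‖(c : ℚ_[p]) * x‖ = 1 := by
    rw [norm_mul, mkUnits_eq, hc, one_mul, ← norm_def, ← PadicInt.isUnit_iff,
      isUnit_iff_toZMod_ne_zero, hx]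
    exact one_ne_zero
  rw [exists_pow_eq_one_mul_zpow_iff (Nat.sub_ne_zero_of_lt (Fact.out : p.Prime).one_lt)
    hw₀ hw₁ hπc hcx, ← coe_one, ← coe_mul, ← coe_pow]
  exact ⟨congrArg _, ext⟩

/-- Proposition 3.12 of the paper: with `N = μ_{p-1} × (p^k·s)^ℤ` (`k ≥ 1`,
`s ∈ 1 + pℤ_p`) the group of universal norms, and `π ∈ ℚ_pˣ` of valuation a multiple
of `k`, there is a unique principal unit `x ∈ 1 + pℤ_p` with `π·x ∈ N`. -/
theorem stmt_3 (p : ℕ) [Fact p.Prime] (hp : Odd p)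
    (k : ℕ) (hk : 1 ≤ k) (s : ℤ_[p]) (hs : ∃ y : ℤ_[p], s = 1 + p * y)
    (π : ℚ_[p]) (hπ : π ≠ 0) (m : ℤ) (hval : π.valuation = k * m) :
    ∃! x : ℤ_[p], (∃ y : ℤ_[p], x = 1 + p * y) ∧
      ∃ (ζ : ℚ_[p]) (n : ℤ), ζ ^ (p - 1) = 1 ∧
        π * (x : ℚ_[p]) = ζ * ((p : ℚ_[p]) ^ k * (s : ℚ_[p])) ^ n :=
  stmt_3_general p k hk s hs π hπ m hval
end

section
/- Let p be a prime, let a, c ∈ ℤ_p with a ≠ 0, set m₀ := p^{max(0, v_p(a) − v_p(c))} (where m₀ := 1 if c = 0), and set z₀ := −m₀·c/a, which lies in ℤ_p. Then the subgroup {(z, m) ∈ ℤ_p × ℤ : a·z + c·m = 0} of the additive group ℤ_p × ℤ equals {(n·z₀, n·m₀) : n ∈ ℤ}. -/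
/-!
Since `a ≠ 0`, a kernel element `(z, m)` is determined by `m`, and `m` occurs exactly when
`a ∣ c·m`. Comparing valuations, this says `p ^ max(0, v(a) - v(c)) ∣ m` (every `m` when `c = 0`),
i.e. `m₀ ∣ m`; the kernel is then generated by `(z₀, m₀)` with `a·z₀ = -m₀·c`.
-/

theorem setOf_mul_add_intCast_mul_eq_zero {R : Type*} [CommRing R] [IsDomain R]
    {a c z₀ : R} {m₀ : ℤ} (ha : a ≠ 0) (hz₀ : a * z₀ = -(m₀ * c))
    (hdvd : ∀ m : ℤ, a ∣ c * m → m₀ ∣ m) :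
    {zm : R × ℤ | a * zm.1 + c * (zm.2 : R) = 0} =
      {zm : R × ℤ | ∃ n : ℤ, zm.1 = (n : R) * z₀ ∧ zm.2 = n * m₀} := by
  ext ⟨z, m⟩
  simp only [Set.mem_ofPred_eq]
  constructor
  · intro h
    obtain ⟨n, rfl⟩ := hdvd m ⟨-z, by linear_combination h⟩
    refine ⟨n, mul_left_cancel₀ ha ?_, mul_comm _ _⟩
    push_cast at h ⊢
    linear_combination h - (n : R) * hz₀
  · rintro ⟨n, rfl, rfl⟩
    push_cast
    linear_combination (n : R) * hz₀

namespace PadicInt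

variable {p : ℕ} [Fact p.Prime]

theorem pow_p_dvd_iff_le_valuation {x : ℤ_[p]} (hx : x ≠ 0) (k : ℕ) :
    (p : ℤ_[p]) ^ k ∣ x ↔ k ≤ x.valuation := by
  rw [← Ideal.mem_span_singleton, mem_span_pow_iff_le_valuation x hx]

theorem dvd_iff_valuation_le {a x : ℤ_[p]} (ha : a ≠ 0) (hx : x ≠ 0) :
    a ∣ x ↔ a.valuation ≤ x.valuation := by
  conv_lhs => rw [unitCoeff_spec ha, mul_comm, Units.mul_right_dvd]
  exact pow_p_dvd_iff_le_valuation hx _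

theorem dvd_mul_intCast_iff {a c : ℤ_[p]} (ha : a ≠ 0) (hc : c ≠ 0) (m : ℤ) :
    a ∣ c * m ↔ (p : ℤ) ^ (a.valuation - c.valuation) ∣ m := by
  rcases eq_or_ne m 0 with rfl | hm
  · simp
  have hm' : (m : ℤ_[p]) ≠ 0 := Int.cast_ne_zero.mpr hm
  rw [dvd_iff_valuation_le ha (mul_ne_zero hc hm'), valuation_mul hc hm', ← pow_p_dvd_int_iff,
    pow_p_dvd_iff_le_valuation hm']
  omega

end PadicInt

open scoped Classical in
/-- Computational heart of the proof of Lemma 3.8 of the paper: the kernel of the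
homomorphism `(z, m) ↦ a·z + c·m` on `ℤ_p × ℤ` (with `a ≠ 0`) is infinite cyclic,
generated by `(z₀, m₀)` where `m₀ = p^{max(0, v_p(a) - v_p(c))}` (with `m₀ = 1`
when `c = 0`) and `z₀ = -m₀·c/a ∈ ℤ_p`. -/
theorem stmt_9 (p : ℕ) [Fact p.Prime] (a c : ℤ_[p]) (ha : a ≠ 0)
    (m₀ : ℤ)
    (hm₀ : m₀ = if c = 0 then 1 else (p : ℤ) ^ (max 0 ((a.valuation : ℤ) - (c.valuation : ℤ))).toNat) :
    ∃ z₀ : ℤ_[p], a * z₀ = -((m₀ : ℤ_[p]) * c) ∧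
      {zm : ℤ_[p] × ℤ | a * zm.1 + c * (zm.2 : ℤ_[p]) = 0} =
        {zm : ℤ_[p] × ℤ | ∃ n : ℤ, zm.1 = (n : ℤ_[p]) * z₀ ∧ zm.2 = n * m₀} := by
  have hdvd : ∀ m : ℤ, a ∣ c * m ↔ m₀ ∣ m := by
    intro m
    subst hm₀
    split_ifs with hc
    · simp [hc]
    · rw [PadicInt.dvd_mul_intCast_iff ha hc]
      congr! 2
      omega
  obtain ⟨w, hw⟩ := (hdvd m₀).mpr dvd_rfl
  exact ⟨-w, by linear_combination hw,
    setOf_mul_add_intCast_mul_eq_zero ha (by linear_combination hw) fun m => (hdvd m).mp⟩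
end
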